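/- arXiv:0711.1520 — 3 statements merged into one kernel-verified Lean document; each statement's English description precedes it below -/
import Mathlib

section
/- Let I be a nonempty finite subset of ℝ₊ⁿ \ {0}, let 𝓔(I) be its Newton polyhedron (the boundary of the convex hull of ⋃_{α∈I}(α+ℝ₊ⁿ)), and let 𝓔°(I) = ∂(⋂_{y∈𝓔(I)}{x ∈ ℝⁿ : ⟨x,y⟩ ≥ 1}) be its dual. Let F be a face of 𝓔(I) not contained in any coordinate hyperplane and let c be a normalized polar vector of F (i.e. c ∈ ℝ₊ⁿ\{0} with inf_{x∈𝓔(I)}⟨c,x⟩ = 1 and F = {x ∈ 𝓔(I) : ⟨c,x⟩ = 1}). Then F meets the diagonal ℝ₊·(1,…,1) if and only if |c| = c₁+⋯+c_n equals min{|α| : α ∈ 𝓔°(I) ∩ ℝ₊ⁿ}. -/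
open Finset

/-- Exit lemma: moving down the diagonal from a point of `closure P` (with `closure P` in the
nonnegative orthant) we hit `frontier P`. -/
lemma aux_exit {n : ℕ} (hn : 0 < n) (P : Set (Fin n → ℝ))
    (hpos : ∀ x ∈ closure P, ∀ i, 0 ≤ x i) (x : Fin n → ℝ) (hx : x ∈ closure P) :
    ∃ t : ℝ, 0 ≤ t ∧ (fun i => x i - t) ∈ frontier P := by
  set T := {t : ℝ | 0 ≤ t ∧ (fun i => x i - t) ∈ closure P} with hT
  have h0T : (0:ℝ) ∈ T := ⟨le_refl 0, by simpa using hx⟩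
  have hbdd : BddAbove T := by
    refine ⟨x ⟨0, hn⟩, fun t ht => ?_⟩
    have h2 := hpos _ ht.2 ⟨0, hn⟩
    simp only [sub_nonneg] at h2
    linarith [h2]
  have hTc : IsClosed T := by
    have hTeq : T = Set.Ici (0:ℝ) ∩ (fun t : ℝ => fun i => x i - t) ⁻¹' closure P := by
      ext t
      simp [hT, Set.mem_Ici, and_comm]
    rw [hTeq]
    exact isClosed_Ici.inter (isClosed_closure.preimage
      (continuous_pi fun i => continuous_const.sub continuous_id))
  set t := sSup T with htdef
  have htT : t ∈ T := hTc.csSup_mem ⟨0, h0T⟩ hbdd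
  have hni : (fun i => x i - t) ∉ interior (closure P) := by
    intro hint
    obtain ⟨r, hr, hball⟩ := Metric.isOpen_iff.mp isOpen_interior _ hint
    have hz : (fun i => x i - (t + r/2)) ∈ closure P := by
      apply interior_subset
      apply hball
      rw [Metric.mem_ball]
      have hd : dist (fun i => x i - (t + r/2)) (fun i => x i - t) ≤ r/2 := by
        refine (dist_pi_le_iff (by linarith)).mpr fun i => ?_
        rw [Real.dist_eq]
        have : x i - (t + r/2) - (x i - t) = -(r/2) := by ring
        rw [this, abs_neg, abs_of_nonneg (by linarith)]
      linarith
    have hmem : t + r/2 ∈ T := ⟨by linarith [htT.1], hz⟩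
    have := le_csSup hbdd hmem
    linarith
  exact ⟨t, htT.1, htT.2, fun h => hni (interior_mono subset_closure h)⟩
open Finset

/-- A convex set with nonempty interior is contained in the closure of its interior. -/
lemma aux_cl {n : ℕ} (P : Set (Fin n → ℝ)) (hP : Convex ℝ P) (w : Fin n → ℝ)
    (hw : w ∈ interior P) : closure P ⊆ closure (interior P) := by
  refine closure_minimal (fun x hx => ?_) isClosed_closure
  have h0 : Filter.Tendsto (fun k : ℕ => (1/(k+1) : ℝ)) Filter.atTop (nhds 0) :=
    tendsto_one_div_add_atTop_nhds_zero_nat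
  have h1 : Filter.Tendsto (fun k : ℕ => x + (1/(k+1) : ℝ) • (w - x)) Filter.atTop (nhds x) := by
    have h2 := (h0.smul_const (w - x)).const_add x
    simpa using h2
  refine mem_closure_of_tendsto h1 (Filter.Eventually.of_forall fun k => ?_)
  refine hP.add_smul_sub_mem_interior hx hw ⟨by positivity, ?_⟩
  rw [div_le_one (by positivity)]
  have : (0:ℝ) ≤ k := Nat.cast_nonneg k
  linarith

/-- Membership in the frontier of the dual region. -/
lemma aux_front {n : ℕ} (E : Set (Fin n → ℝ)) (α : Fin n → ℝ)
    (hmem : ∀ y ∈ E, 1 ≤ ∑ i, α i * y i)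
    (hnear : ∀ δ : ℝ, 1 < δ → ∃ y ∈ E, ∑ i, α i * y i < δ) :
    α ∈ frontier (⋂ y ∈ E, {x : Fin n → ℝ | 1 ≤ ∑ i, x i * y i}) := by
  have hK : α ∈ ⋂ y ∈ E, {x : Fin n → ℝ | 1 ≤ ∑ i, x i * y i} :=
    Set.mem_iInter₂.mpr fun y hy => hmem y hy
  refine ⟨subset_closure hK, fun hint => ?_⟩
  obtain ⟨r, hr, hball⟩ := Metric.isOpen_iff.mp isOpen_interior _ hint
  set ε : ℝ := min (1/2) (r/(2*(‖α‖+1))) with hε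
  have hα1 : (0:ℝ) < ‖α‖ + 1 := by positivity
  have hε0 : 0 < ε := lt_min (by norm_num) (by positivity)
  have hε1 : ε < 1 := lt_of_le_of_lt (min_le_left _ _) (by norm_num)
  have hz : (1-ε) • α ∈ ⋂ y ∈ E, {x : Fin n → ℝ | 1 ≤ ∑ i, x i * y i} := by
    apply interior_subset
    apply hball
    rw [Metric.mem_ball, dist_eq_norm]
    have : (1-ε) • α - α = (-ε) • α := by
      funext i
      simp only [Pi.sub_apply, Pi.smul_apply, smul_eq_mul]
      ring
    rw [this, norm_smul, Real.norm_eq_abs, abs_neg, abs_of_pos hε0]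
    have h2 : ε ≤ r/(2*(‖α‖+1)) := min_le_right _ _
    have h3 : ε * ‖α‖ ≤ r/(2*(‖α‖+1)) * ‖α‖ :=
      mul_le_mul_of_nonneg_right h2 (norm_nonneg α)
    have h4 : r/(2*(‖α‖+1)) * ‖α‖ < r := by
      rw [div_mul_eq_mul_div, div_lt_iff₀ (by positivity)]
      nlinarith [norm_nonneg α]
    linarith
  obtain ⟨y, hy, hval⟩ := hnear (1/(1-ε)) (one_lt_one_div (by linarith) (by linarith))
  have h5 : 1 ≤ ∑ i, ((1-ε) • α) i * y i := Set.mem_iInter₂.mp hz y hy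
  have h6 : ∑ i, ((1-ε) • α) i * y i = (1-ε) * ∑ i, α i * y i := by
    rw [Finset.mul_sum]
    exact Finset.sum_congr rfl fun i _ => by simp [smul_eq_mul]; ring
  rw [h6] at h5
  have h7 : (1-ε) * ∑ i, α i * y i < (1-ε) * (1/(1-ε)) :=
    mul_lt_mul_of_pos_left hval (by linarith)
  rw [mul_one_div, div_self (by linarith : (1:ℝ)-ε ≠ 0)] at h7
  linarith

/-- For a nonempty finite set `I ⊆ ℝ₊ⁿ \ {0}` with Newton polyhedron `E`,
dual `Edual`, a face `F` of `E` with normalized polar vector `c`, not contained in a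
coordinate hyperplane, `F` meets the diagonal iff `|c|` equals
`min{|α| : α ∈ Edual ∩ ℝ₊ⁿ}`. -/
theorem stmt0 (n : ℕ) (hn : 0 < n) (I : Set (Fin n → ℝ)) (hIfin : I.Finite)
    (hIne : I.Nonempty)
    (hIpos : ∀ α ∈ I, (∀ i, 0 ≤ α i) ∧ α ≠ 0)
    (E : Set (Fin n → ℝ))
    (hE : E = frontier (convexHull ℝ (⋃ α ∈ I, {x : Fin n → ℝ | ∀ i, α i ≤ x i})))
    (Edual : Set (Fin n → ℝ))
    (hEdual : Edual = frontier (⋂ y ∈ E, {x : Fin n → ℝ | 1 ≤ ∑ i, x i * y i}))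
    (c : Fin n → ℝ) (hc0 : ∀ i, 0 ≤ c i) (hcne : c ≠ 0)
    (hglb : IsGLB ((fun x => ∑ i, c i * x i) '' E) 1)
    (F : Set (Fin n → ℝ))
    (hF : F = {x ∈ E | ∑ i, c i * x i = 1})
    (hFhyp : ¬ ∃ j : Fin n, ∀ x ∈ F, x j = 0) :
    (∃ t : ℝ, 0 ≤ t ∧ (fun _ => t) ∈ F) ↔
      (∑ i, c i) = sInf {r : ℝ | ∃ α ∈ Edual, (∀ i, 0 ≤ α i) ∧ r = ∑ i, α i} := by
  classical
  set U : Set (Fin n → ℝ) := ⋃ α ∈ I, {x : Fin n → ℝ | ∀ i, α i ≤ x i} with hU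
  set P := convexHull ℝ U with hPdef
  set S := {r : ℝ | ∃ α ∈ Edual, (∀ i, 0 ≤ α i) ∧ r = ∑ i, α i} with hS
  obtain ⟨α₀, hα₀⟩ := hIne
  have hα₀n := (hIpos α₀ hα₀).1
  have hPconv : Convex ℝ P := convex_convexHull ℝ U
  have hUP : U ⊆ P := subset_convexHull ℝ U
  have hPC : P ⊆ closure P := subset_closure
  have hUsub : U ⊆ {x : Fin n → ℝ | ∀ i, 0 ≤ x i} := by
    intro x hx
    simp only [hU, Set.mem_iUnion] at hx
    obtain ⟨β, hβ, hxβ⟩ := hx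
    exact fun i => le_trans ((hIpos β hβ).1 i) (hxβ i)
  have hQconv : Convex ℝ {x : Fin n → ℝ | ∀ i, 0 ≤ x i} := by
    intro x hx y hy a b ha hb hab i
    have h1 := hx i
    have h2 := hy i
    simp only [Pi.add_apply, Pi.smul_apply, smul_eq_mul]
    have := add_nonneg (mul_nonneg ha h1) (mul_nonneg hb h2)
    simpa using this
  have hQcl : IsClosed {x : Fin n → ℝ | ∀ i, 0 ≤ x i} := by
    have : {x : Fin n → ℝ | ∀ i, 0 ≤ x i} = ⋂ i, (fun x : Fin n → ℝ => x i) ⁻¹' Set.Ici 0 := by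
      ext x; simp [Set.mem_iInter]
    rw [this]
    exact isClosed_iInter fun i => isClosed_Ici.preimage (continuous_apply i)
  have hCpos : ∀ x ∈ closure P, ∀ i, 0 ≤ x i :=
    fun x hx => closure_minimal (convexHull_min hUsub hQconv) hQcl hx
  have hEC : E ⊆ closure P := by rw [hE]; exact frontier_subset_closure
  have hElb : ∀ y ∈ E, 1 ≤ ∑ i, c i * y i := fun y hy => hglb.1 ⟨y, hy, rfl⟩
  have hcsum : 0 < ∑ i, c i := by
    obtain ⟨i, hi⟩ := Function.ne_iff.mp hcne
    exact Finset.sum_pos' (fun j _ => hc0 j)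
      ⟨i, Finset.mem_univ i, lt_of_le_of_ne (hc0 i) (by simpa using Ne.symm hi)⟩
  have hKmem : ∀ α ∈ Edual, ∀ y ∈ E, 1 ≤ ∑ i, α i * y i := by
    intro α hα y hy
    rw [hEdual] at hα
    have hKcl : IsClosed (⋂ y ∈ E, {x : Fin n → ℝ | 1 ≤ ∑ i, x i * y i}) :=
      isClosed_biInter fun y hy => isClosed_le continuous_const
        (continuous_finset_sum _ fun i _ => (continuous_apply i).mul continuous_const)
    have h1 := frontier_subset_closure hα
    rw [hKcl.closure_eq] at h1
    exact Set.mem_iInter₂.mp h1 y hy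
  have hcS : (∑ i, c i) ∈ S := by
    refine ⟨c, ?_, hc0, rfl⟩
    rw [hEdual]
    refine aux_front E c hElb fun δ hδ => ?_
    by_contra h
    push_neg at h
    have hlb : δ ∈ lowerBounds ((fun x => ∑ i, c i * x i) '' E) := by
      rintro v ⟨y, hy, rfl⟩
      exact h y hy
    linarith [hglb.2 hlb]
  constructor
  · rintro ⟨t, ht0, htF⟩
    rw [hF] at htF
    obtain ⟨htE, htsum⟩ := htF
    have htsum' : (∑ i, c i) * t = 1 := by
      rw [Finset.sum_mul]
      exact htsum
    have htpos : 0 < t := by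
      rcases ht0.lt_or_eq with h | h
      · exact h
      · exfalso; rw [← h, mul_zero] at htsum'; norm_num at htsum'
    have hlb : ∀ r ∈ S, (∑ i, c i) ≤ r := by
      rintro r ⟨α, hαE, hα0, rfl⟩
      have h1 : 1 ≤ ∑ i, α i * t := hKmem α hαE _ htE
      rw [← Finset.sum_mul] at h1
      exact le_of_mul_le_mul_right (by linarith) htpos
    exact le_antisymm (le_csInf ⟨_, hcS⟩ hlb) (csInf_le ⟨∑ i, c i, hlb⟩ hcS)
  · intro hsum
    set t₁ := ∑ i, α₀ i with ht₁
    have ht₁U : (fun _ => t₁) ∈ U := by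
      simp only [hU, Set.mem_iUnion]
      exact ⟨α₀, hα₀, fun i => Finset.single_le_sum (fun j _ => hα₀n j) (Finset.mem_univ i)⟩
    have ht₁C : (fun _ => t₁) ∈ closure P := hPC (hUP ht₁U)
    obtain ⟨s, hs0, hsF⟩ := aux_exit hn P hCpos _ ht₁C
    set t₀ := t₁ - s with ht₀def
    have ht₀E : (fun _ => t₀) ∈ E := by rw [hE]; exact hsF
    have h6 : 1 ≤ (∑ i, c i) * t₀ := by
      rw [Finset.sum_mul]
      exact hElb _ ht₀E
    have ht₀pos : 0 < t₀ := by nlinarith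
    have hnotint : (fun _ => t₀) ∉ interior P := by
      rw [hE] at ht₀E
      exact ht₀E.2
    obtain ⟨f, hf⟩ := geometric_hahn_banach_point_open hPconv.interior isOpen_interior hnotint
    set a : Fin n → ℝ := fun i => f (fun j => if i = j then 1 else 0) with ha
    have hfa : ∀ z, f z = ∑ i, z i * a i := by
      intro z
      conv_lhs => rw [pi_eq_sum_univ z]
      rw [map_sum]
      exact Finset.sum_congr rfl fun i _ => by rw [map_smul]; simp [ha, smul_eq_mul]
    have hwO : (fun i => α₀ i + 1) ∈ interior P := by
      have hO : IsOpen {x : Fin n → ℝ | ∀ i, α₀ i < x i} := by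
        have : {x : Fin n → ℝ | ∀ i, α₀ i < x i}
            = ⋂ i, (fun x : Fin n → ℝ => x i) ⁻¹' Set.Ioi (α₀ i) := by
          ext x; simp [Set.mem_iInter]
        rw [this]
        exact isOpen_iInter_of_finite fun i => isOpen_Ioi.preimage (continuous_apply i)
      have hOP : {x : Fin n → ℝ | ∀ i, α₀ i < x i} ⊆ P := fun x hx => by
        apply hUP
        simp only [hU, Set.mem_iUnion]
        exact ⟨α₀, hα₀, fun i => (hx i).le⟩
      exact interior_maximal hOP hO (fun i => by linarith)
    have hext : ∀ y ∈ closure P, f (fun _ => t₀) ≤ f y := by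
      intro y hy
      have h2 : closure P ⊆ closure (interior P) := aux_cl P hPconv _ hwO
      have h3 : closure (interior P) ⊆ {z | f (fun _ => t₀) ≤ f z} :=
        closure_minimal (fun b hb => (hf b hb).le)
          (isClosed_le continuous_const f.continuous)
      exact h3 (h2 hy)
    have hα₀C : α₀ ∈ closure P := by
      apply hPC; apply hUP
      simp only [hU, Set.mem_iUnion]
      exact ⟨α₀, hα₀, fun i => le_refl _⟩
    have hfα₀ : f (fun _ => t₀) ≤ f α₀ := hext α₀ hα₀C
    have ha0 : ∀ i, 0 ≤ a i := by
      intro i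
      by_contra h
      push_neg at h
      set s' := (f α₀ - f (fun _ => t₀) + 1) / (-a i) with hs'
      have hs'pos : 0 < s' := div_pos (by linarith) (by linarith)
      have hmemP : (α₀ + s' • fun j => if i = j then (1:ℝ) else 0) ∈ closure P := by
        apply hPC; apply hUP
        simp only [hU, Set.mem_iUnion]
        refine ⟨α₀, hα₀, fun j => ?_⟩
        simp only [Pi.add_apply, Pi.smul_apply, smul_eq_mul]
        have : (0:ℝ) ≤ s' * (if i = j then 1 else 0) := by
          split_ifs <;> simp [hs'pos.le]
        linarith
      have h7 := hext _ hmemP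
      rw [map_add, map_smul, smul_eq_mul] at h7
      have hcancel : s' * (-a i) = f α₀ - f (fun _ => t₀) + 1 :=
        div_mul_cancel₀ _ (by linarith)
      have : f (fun j => if i = j then (1:ℝ) else 0) = a i := rfl
      rw [this] at h7
      nlinarith
    have hapos : 0 < ∑ i, a i := by
      rcases (Finset.sum_nonneg fun i _ => ha0 i).lt_or_eq with h | h
      · exact h
      · exfalso
        have hz : ∀ i ∈ Finset.univ, a i = 0 :=
          (Finset.sum_eq_zero_iff_of_nonneg fun i _ => ha0 i).mp h.symm
        have h8 : f (fun i => α₀ i + 1) = 0 := by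
          rw [hfa]
          exact Finset.sum_eq_zero fun i _ => by rw [hz i (Finset.mem_univ i), mul_zero]
        have h9 : f (fun _ => t₀) = 0 := by
          rw [hfa]
          exact Finset.sum_eq_zero fun i _ => by rw [hz i (Finset.mem_univ i), mul_zero]
        have := hf _ hwO
        rw [h8, h9] at this
        exact lt_irrefl 0 this
    set D := t₀ * ∑ i, a i with hD
    have hDpos : 0 < D := mul_pos ht₀pos hapos
    have hft : f (fun _ => t₀) = D := by
      rw [hfa, hD, Finset.mul_sum]
    set β : Fin n → ℝ := fun i => a i / D with hβ
    have hβmem : ∀ y ∈ E, 1 ≤ ∑ i, β i * y i := by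
      intro y hy
      have h4 : D ≤ f y := hft ▸ hext y (hEC hy)
      rw [hfa] at h4
      have heq : ∑ i, β i * y i = (∑ i, y i * a i) / D := by
        rw [Finset.sum_div]
        exact Finset.sum_congr rfl fun i _ => by rw [hβ]; ring
      rw [heq]
      exact (one_le_div hDpos).mpr h4
    have hβeq : ∑ i, β i * t₀ = 1 := by
      have heq : ∑ i, β i * t₀ = (∑ i, a i) * t₀ / D := by
        rw [Finset.sum_mul, Finset.sum_div]
        exact Finset.sum_congr rfl fun i _ => by rw [hβ]; ring
      rw [heq, hD, mul_comm t₀ (∑ i, a i), div_self (by positivity)]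
    have hβE : β ∈ Edual := by
      rw [hEdual]
      refine aux_front E β hβmem fun δ hδ => ⟨fun _ => t₀, ht₀E, ?_⟩
      have : ∑ i, β i * ((fun _ => t₀) i) = 1 := hβeq
      rw [this]; exact hδ
    have hβS : (∑ i, β i) ∈ S :=
      ⟨β, hβE, fun i => div_nonneg (ha0 i) hDpos.le, rfl⟩
    have hβsum : ∑ i, β i = 1 / t₀ := by
      have heq : ∑ i, β i = (∑ i, a i) / D := by
        rw [Finset.sum_div]
      rw [heq, hD]
      rw [mul_comm t₀ (∑ i, a i), div_mul_eq_div_div, div_self (by positivity)]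
    have hlbS : ∀ r ∈ S, 1/t₀ ≤ r := by
      rintro r ⟨α, hαE, hα0, rfl⟩
      have h1 : 1 ≤ ∑ i, α i * t₀ := hKmem α hαE _ ht₀E
      rw [← Finset.sum_mul] at h1
      rw [div_le_iff₀ ht₀pos]
      linarith
    have hineq : (∑ i, c i) ≤ 1 / t₀ := by
      rw [hsum]
      calc sInf S ≤ ∑ i, β i := csInf_le ⟨1/t₀, hlbS⟩ hβS
        _ = 1/t₀ := hβsum
    refine ⟨t₀, ht₀pos.le, ?_⟩
    rw [hF]
    refine ⟨ht₀E, ?_⟩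
    have h5 : (∑ i, c i) * t₀ ≤ 1 := by
      rw [← le_div_iff₀ ht₀pos] at *
      linarith [hineq]
    have h10 : (∑ i, c i) * t₀ = 1 := le_antisymm h5 h6
    show ∑ i, c i * ((fun _ => t₀) i) = 1
    rw [show (∑ i, c i * ((fun _ => t₀) i)) = (∑ i, c i) * t₀ from (Finset.sum_mul ..).symm]
    exact h10
end

section
/- Let f : ℕⁿ → ℕ₀ be a uniform multiplicative function with associated function g (with polynomial growth bound g(ν) ≤ C(1+|ν|)^M), let S*(g) = {ν ∈ ℕ₀ⁿ\{0} : g(ν) ≠ 0} be nonempty, and let c ∈ (0,∞)ⁿ be a normalized polar vector of the smallest face 𝓕₀(f) of the Newton polyhedron 𝓔(S*(g)) that meets the diagonal, with 𝓕₀(f) compact. Then the multiple Dirichlet series 𝓜(f;s) = Σ_{m∈ℕⁿ} f(m) m₁^{-s₁}⋯m_n^{-s_n} converges absolutely on {s ∈ ℂⁿ : Re(s_i) > c_i for all i}. -/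
open Finset

/-
Every exponent vector `ν ≠ 0` with `g ν ≠ 0` satisfies `⟨c, ν⟩ ≥ 1`: the segment from `ν` to
`-𝟏` leaves the positive orthant, so it crosses the frontier `E` of the convex hull, at a point
below `ν` where `⟨c, ·⟩ ≥ 1`. For `σ = Re s` there is `δ > 0` with `σ ≥ (1 + δ) c + δ`, hence
`⟨σ, ν⟩ ≥ 1 + δ + δ |ν|`, and the polynomial growth of `g` is absorbed by the factor `2 ^ (-δ |ν|)`:
every local factor `∑ ν, g ν p ^ (-⟨σ, ν⟩)` is at most `1 + A p ^ (-1 - δ)`. By multiplicativity,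
each finite partial sum of `𝓜(f; s)` is bounded by `∏ p, (1 + A p ^ (-1 - δ)) ≤ exp (A ζ(1 + δ))`.
-/

theorem Finset.one_add_sum_le_prod_one_add {ι R : Type*} [CommSemiring R] [PartialOrder R]
    [IsOrderedRing R] (s : Finset ι) {x : ι → R} (hx : ∀ i, 0 ≤ x i) :
    1 + ∑ i ∈ s, x i ≤ ∏ i ∈ s, (1 + x i) := by
  induction s using Finset.cons_induction with
  | empty => simp
  | cons j s hj ih =>
    rw [sum_cons, prod_cons]
    calc 1 + (x j + ∑ i ∈ s, x i)
        ≤ 1 + (x j + ∑ i ∈ s, x i) + x j * ∑ i ∈ s, x i :=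
          le_add_of_nonneg_right (mul_nonneg (hx j) (sum_nonneg fun i _ => hx i))
      _ = (1 + x j) * (1 + ∑ i ∈ s, x i) := by ring
      _ ≤ (1 + x j) * ∏ i ∈ s, (1 + x i) :=
          mul_le_mul_of_nonneg_left ih (add_nonneg zero_le_one (hx j))

theorem Finset.one_add_sum_rpow_le_prod_pow_ceil {ι : Type*} (s : Finset ι) {x : ι → ℝ}
    (hx : ∀ i, 0 ≤ x i) (M : ℝ) :
    (1 + ∑ i ∈ s, x i) ^ M ≤ ∏ i ∈ s, (1 + x i) ^ ⌈M⌉₊ :=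
  calc (1 + ∑ i ∈ s, x i) ^ M ≤ (1 + ∑ i ∈ s, x i) ^ (⌈M⌉₊ : ℝ) :=
        Real.rpow_le_rpow_of_exponent_le (le_add_of_nonneg_right (sum_nonneg fun i _ => hx i))
          (Nat.le_ceil M)
    _ ≤ (∏ i ∈ s, (1 + x i)) ^ ⌈M⌉₊ := by
        rw [Real.rpow_natCast]
        exact pow_le_pow_left₀ (add_nonneg zero_le_one (sum_nonneg fun i _ => hx i))
          (s.one_add_sum_le_prod_one_add hx) _
    _ = ∏ i ∈ s, (1 + x i) ^ ⌈M⌉₊ := (prod_pow s _ _).symm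

theorem Finset.sum_prod_le_prod_sum_image {κ α R : Type*} [Fintype κ] [DecidableEq κ]
    [DecidableEq α] [CommSemiring R] [PartialOrder R] [IsOrderedRing R] {h : κ → α → R}
    (hh : ∀ k a, 0 ≤ h k a) (s : Finset (κ → α)) :
    ∑ x ∈ s, ∏ k, h k (x k) ≤ ∏ k, ∑ a ∈ s.image (· k), h k a := by
  rw [prod_univ_sum]
  refine sum_le_sum_of_subset_of_nonneg (fun x hx => ?_)
    fun x _ _ => prod_nonneg fun k _ => hh k (x k)
  exact Fintype.mem_piFinset.2 fun k => mem_image_of_mem _ hx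

theorem Finset.sum_prod_le_tsum_pow {ι : Type*} [Fintype ι] {w : ℕ → ℝ} (hw : ∀ k, 0 ≤ w k)
    (hws : Summable w) (t : Finset (ι → ℕ)) :
    ∑ ν ∈ t, ∏ i, w (ν i) ≤ (∑' k, w k) ^ Fintype.card ι := by
  classical
  calc ∑ ν ∈ t, ∏ i, w (ν i) ≤ ∏ i, ∑ k ∈ t.image (· i), w k :=
        sum_prod_le_prod_sum_image (fun _ k => hw k) t
    _ ≤ ∏ _i : ι, ∑' k, w k :=
        prod_le_prod (fun i _ => sum_nonneg fun k _ => hw k)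
          fun i _ => hws.sum_le_tsum _ fun k _ => hw k
    _ = (∑' k, w k) ^ Fintype.card ι := by rw [prod_const, card_univ]

theorem summable_one_add_pow_div_pow {q : ℝ} (hq : 1 < q) (m : ℕ) :
    Summable fun k : ℕ => (1 + k : ℝ) ^ m / q ^ k := by
  have hr : ‖q⁻¹‖ < 1 := by
    rw [norm_inv, Real.norm_of_nonneg (by linarith)]; exact inv_lt_one_of_one_lt₀ hq
  have hs : Summable fun k : ℕ => ((k + 1 : ℕ) : ℝ) ^ m * q⁻¹ ^ (k + 1) :=
    (summable_nat_add_iff (f := fun k : ℕ => (k : ℝ) ^ m * q⁻¹ ^ k) 1).2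
      (summable_pow_mul_geometric_of_norm_lt_one m hr)
  refine (hs.mul_left q).congr fun k => ?_
  have hq0 : q ≠ 0 := by positivity
  simp only [Nat.cast_add, Nat.cast_one, pow_succ, inv_pow]
  field_simp
  ring

theorem IsPreconnected.inter_frontier_nonempty {X : Type*} [TopologicalSpace X]
    {s t : Set X} (hs : IsPreconnected s) (hst : (s ∩ t).Nonempty)
    (hst' : (s \ t).Nonempty) : (s ∩ frontier t).Nonempty := by
  by_contra hfr
  have hnot : ∀ x ∈ s, x ∉ frontier t := fun x hx hxt => hfr ⟨x, hx, hxt⟩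
  obtain ⟨x, -, hxu, hxv⟩ := hs (interior t) (closure t)ᶜ isOpen_interior
    isClosed_closure.isOpen_compl
    (fun x hx => by
      by_cases hcl : x ∈ closure t
      · exact Or.inl (by_contra fun hint => hnot x hx ⟨hcl, hint⟩)
      · exact Or.inr hcl)
    (hst.mono fun x (hx : x ∈ s ∩ t) =>
      ⟨hx.1, by_contra fun hint => hnot x hx.1 ⟨subset_closure hx.2, hint⟩⟩)
    (hst'.mono fun x (hx : x ∈ s \ t) =>
      ⟨hx.1, fun hcl => hnot x hx.1 ⟨hcl, fun hint => hx.2 (interior_subset hint)⟩⟩)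
  exact hxv (interior_subset_closure hxu)

theorem le_sum_mul_of_le_on_frontier {ι : Type*} [Fintype ι] [Nonempty ι]
    {H : Set (ι → ℝ)} (hH : H ⊆ Set.Ici 0) {c : ι → ℝ} (hc : 0 ≤ c) {b : ℝ}
    (hb : ∀ x ∈ frontier H, b ≤ ∑ i, c i * x i) {y : ι → ℝ} (hy : y ∈ H) :
    b ≤ ∑ i, c i * y i := by
  have hout : -1 ∉ H := fun h => absurd (hH h (Classical.arbitrary ι)) (by norm_num)
  obtain ⟨x, hxy, hx⟩ := (convex_segment y (-1)).isPreconnected.inter_frontier_nonempty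
    ⟨y, left_mem_segment ℝ y (-1), hy⟩ ⟨-1, right_mem_segment ℝ y (-1), hout⟩
  have hle : x ≤ y := (convex_Iic y).segment_subset (Set.mem_Iic.2 le_rfl)
    (fun i => by
      have h0 : (0 : ℝ) ≤ y i := hH hy i
      simpa using (show (-1 : ℝ) ≤ y i by linarith)) hxy
  calc b ≤ ∑ i, c i * x i := hb x hx
    _ ≤ ∑ i, c i * y i := sum_le_sum fun i _ => mul_le_mul_of_nonneg_left (hle i) (hc i)

open Filter Topology in
theorem exists_pos_one_add_mul_add_lt {ι : Type*} [Finite ι] {c σ : ι → ℝ}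
    (h : ∀ i, c i < σ i) : ∃ δ > 0, ∀ i, (1 + δ) * c i + δ < σ i := by
  have hev : ∀ᶠ δ in 𝓝 (0 : ℝ), ∀ i, (1 + δ) * c i + δ < σ i :=
    eventually_all.2 fun i => by
      have hcont : Continuous fun δ : ℝ => (1 + δ) * c i + δ := by fun_prop
      exact hcont.continuousAt.eventually_lt continuousAt_const (by simpa using h i)
  exact ((hev.filter_mono (nhdsWithin_le_nhds (s := Set.Ioi 0))).and
    self_mem_nhdsWithin).exists.imp fun δ hδ => ⟨hδ.2, hδ.1⟩

theorem Nat.prod_pow_factorization_of_primeFactors_subset {m : ℕ} (hm : m ≠ 0)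
    {P : Finset ℕ} (hP : m.primeFactors ⊆ P) : ∏ p ∈ P, p ^ m.factorization p = m := by
  rw [← Finsupp.prod_of_support_subset _ hP _ fun _ _ => pow_zero _,
    Nat.prod_factorization_pow_eq_self hm]

def IsMultiplicativeVec {ι M : Type*} [Fintype ι] [Mul M] (f : (ι → ℕ) → M) : Prop :=
  ∀ m m' : ι → ℕ, (∀ i, 0 < m i) → (∀ i, 0 < m' i) →
    Nat.gcd (univ.lcm m) (univ.lcm m') = 1 → f (fun i => m i * m' i) = f m * f m'

namespace IsMultiplicativeVec

variable {ι M : Type*} [Fintype ι]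

theorem map_mul_of_coprime [Mul M] {f : (ι → ℕ) → M} (hf : IsMultiplicativeVec f)
    {m m' : ι → ℕ} (hm : ∀ i, 0 < m i) (hm' : ∀ i, 0 < m' i)
    (hcop : ∀ i j, Nat.Coprime (m i) (m' j)) : f (fun i => m i * m' i) = f m * f m' :=
  hf m m' hm hm' <|
    (Nat.Coprime.prod_left fun i _ => Nat.Coprime.prod_right fun j _ => hcop i j)
      |>.coprime_dvd_left (univ.lcm_dvd_prod m) |>.coprime_dvd_right (univ.lcm_dvd_prod m')

theorem map_one_eq_one [MonoidWithZero M] [IsLeftCancelMulZero M] {f : (ι → ℕ) → M}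
    (hf : IsMultiplicativeVec f) {m : ι → ℕ} (hm : ∀ i, 0 < m i) (hfm : f m ≠ 0) : f 1 = 1 := by
  have h := hf.map_mul_of_coprime hm (fun _ => one_pos) fun i _ => Nat.coprime_one_right _
  simp only [mul_one] at h
  exact mul_left_cancel₀ hfm (h.symm.trans (mul_one _).symm)

theorem map_prod_primePow [CommMonoid M] {f : (ι → ℕ) → M} (hf : IsMultiplicativeVec f)
    (h1 : f 1 = 1) {P : Finset ℕ} (hP : ∀ p ∈ P, p.Prime) (φ : ℕ → ι → ℕ) :
    f (fun i => ∏ p ∈ P, p ^ φ p i) = ∏ p ∈ P, f (fun i => p ^ φ p i) := by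
  classical
  induction P using Finset.induction with
  | empty => simp only [prod_empty]; exact h1
  | insert q P hq ih =>
    have hqP : q.Prime := hP q (mem_insert_self q P)
    have hPP : ∀ p ∈ P, p.Prime := fun p hp => hP p (mem_insert_of_mem hp)
    simp only [prod_insert hq]
    rw [hf.map_mul_of_coprime (fun i => pow_pos hqP.pos _)
      (fun i => prod_pos fun p hp => pow_pos (hPP p hp).pos _)
      (fun i j => Nat.Coprime.prod_right fun p hp => Nat.Coprime.pow _ _
        ((Nat.coprime_primes hqP (hPP p hp)).2 fun h => hq (h ▸ hp))), ih hPP]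

theorem eq_prod_factorization [CommMonoid M] {f : (ι → ℕ) → M} (hf : IsMultiplicativeVec f)
    (h1 : f 1 = 1) {P : Finset ℕ} (hP : ∀ p ∈ P, p.Prime) {m : ι → ℕ} (hm : ∀ i, m i ≠ 0)
    (hmP : ∀ i, (m i).primeFactors ⊆ P) :
    f m = ∏ p ∈ P, f (fun i => p ^ (m i).factorization p) := by
  conv_lhs => rw [show m = fun i => ∏ p ∈ P, p ^ (m i).factorization p from
    funext fun i => (Nat.prod_pow_factorization_of_primeFactors_subset (hm i) (hmP i)).symm]
  exact hf.map_prod_primePow h1 hP fun p i => (m i).factorization p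

theorem norm_natCast_div_prod_cpow {f : (ι → ℕ) → ℕ} (hf : IsMultiplicativeVec f)
    (s : ι → ℂ) : IsMultiplicativeVec fun m => ‖(f m : ℂ) / ∏ i, (m i : ℂ) ^ (s i)‖ := by
  intro m m' hm hm' hcop
  simp only [hf m m' hm hm' hcop, Nat.cast_mul, Complex.natCast_mul_natCast_cpow,
    prod_mul_distrib, mul_div_mul_comm, norm_mul]

end IsMultiplicativeVec

theorem IsMultiplicativeVec.summable_of_sum_primePow_le {ι : Type*} [Fintype ι]
    {F : (ι → ℕ) → ℝ} (hF : IsMultiplicativeVec F) (h1 : F 1 = 1) (h0 : ∀ m, 0 ≤ F m)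
    {a : ℕ → ℝ} (ha0 : ∀ p, 0 ≤ a p) (ha : Summable a)
    (hloc : ∀ p, p.Prime → ∀ t : Finset (ι → ℕ), ∑ ν ∈ t, F (fun i => p ^ ν i) ≤ 1 + a p) :
    Summable fun m : {m : ι → ℕ // ∀ i, 0 < m i} => F m.1 := by
  classical
  refine summable_of_sum_le (c := Real.exp (∑' p, a p)) (fun m => h0 _) fun u => ?_
  obtain ⟨P, hP, hmP⟩ : ∃ P : Finset ℕ, (∀ p ∈ P, p.Prime) ∧
      ∀ m ∈ u, ∀ i, (m.1 i).primeFactors ⊆ P :=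
    ⟨u.biUnion fun m => univ.biUnion fun i => (m.1 i).primeFactors,
      fun p hp => by
        obtain ⟨m, -, i, -, hp⟩ := by simpa only [mem_biUnion] using hp
        exact Nat.prime_of_mem_primeFactors hp,
      fun m hm i => (subset_biUnion_of_mem (fun i => (m.1 i).primeFactors) (mem_univ i)).trans
        (subset_biUnion_of_mem (fun m : {m : ι → ℕ // ∀ i, 0 < m i} =>
          univ.biUnion fun i => (m.1 i).primeFactors) hm)⟩
  let φ : {m : ι → ℕ // ∀ i, 0 < m i} → P → ι → ℕ := fun m p i => (m.1 i).factorization p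
  have hF_eq : ∀ m ∈ u, F m.1 = ∏ p : P, F (fun i => p.1 ^ φ m p i) := fun m hm =>
    (hF.eq_prod_factorization h1 hP (fun i => (m.2 i).ne') (hmP m hm)).trans
      (prod_coe_sort P fun p => F fun i => p ^ (m.1 i).factorization p).symm
  have hφ : Set.InjOn φ u := fun m hm m' hm' hmm' => Subtype.ext <| funext fun i => by
    rw [← Nat.prod_pow_factorization_of_primeFactors_subset (m.2 i).ne' (hmP m hm i),
      ← Nat.prod_pow_factorization_of_primeFactors_subset (m'.2 i).ne' (hmP m' hm' i)]
    exact prod_congr rfl fun p hp => congrArg (p ^ ·) (congrFun (congrFun hmm' ⟨p, hp⟩) i)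
  calc ∑ m ∈ u, F m.1 = ∑ x ∈ u.image φ, ∏ p : P, F (fun i => p.1 ^ x p i) := by
        rw [sum_image hφ]; exact sum_congr rfl hF_eq
    _ ≤ ∏ p : P, ∑ ν ∈ (u.image φ).image (· p), F (fun i => p.1 ^ ν i) :=
        sum_prod_le_prod_sum_image (h := fun (p : P) (ν : ι → ℕ) => F fun i => p.1 ^ ν i)
          (fun _ _ => h0 _) _
    _ ≤ ∏ p : P, (1 + a p) :=
        prod_le_prod (fun _ _ => sum_nonneg fun _ _ => h0 _) fun p _ => hloc p (hP p p.2) _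
    _ ≤ Real.exp (∑ p : P, a p) := Real.prod_one_add_le_exp_sum _ fun p => ha0 p
    _ ≤ Real.exp (∑' p, a p) := by
        rw [Real.exp_le_exp, sum_coe_sort P a]
        exact ha.sum_le_tsum P fun p _ => ha0 p

theorem norm_natCast_div_prod_cpow_pow {ι : Type*} [Fintype ι] {p : ℕ} (hp : 0 < p)
    (k : ℕ) (ν : ι → ℕ) (s : ι → ℂ) :
    ‖(k : ℂ) / ∏ i, ((p ^ ν i : ℕ) : ℂ) ^ (s i)‖ = k / (p : ℝ) ^ ∑ i, (s i).re * ν i := by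
  have hp' : (0 : ℝ) < p := Nat.cast_pos.2 hp
  rw [norm_div, norm_prod, Complex.norm_natCast, Real.rpow_sum_of_pos hp']
  congr 1
  refine prod_congr rfl fun i _ => ?_
  rw [Complex.norm_natCast_cpow_of_pos (pow_pos hp _), Nat.cast_pow, ← Real.rpow_natCast,
    ← Real.rpow_mul hp'.le, mul_comm]

theorem exists_sum_div_rpow_le {ι : Type*} [Fintype ι] {g : (ι → ℕ) → ℕ} {C M δ : ℝ}
    {c σ : ι → ℝ} (hδ : 0 < δ) (hg0 : g 0 = 1)
    (hgC : ∀ ν, (g ν : ℝ) ≤ C * (1 + ∑ i, (ν i : ℝ)) ^ M)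
    (hc : ∀ ν, ν ≠ 0 → g ν ≠ 0 → 1 ≤ ∑ i, c i * ν i) (hσ : ∀ i, (1 + δ) * c i + δ ≤ σ i) :
    ∃ A, 0 ≤ A ∧ ∀ p : ℝ, 2 ≤ p → ∀ t : Finset (ι → ℕ),
      ∑ ν ∈ t, g ν / p ^ ∑ i, σ i * ν i ≤ 1 + A / p ^ (1 + δ) := by
  classical
  have hC : 1 ≤ C := by simpa [hg0] using hgC 0
  set q : ℝ := 2 ^ δ
  have hq : 1 < q := Real.one_lt_rpow one_lt_two hδ
  set w : ℕ → ℝ := fun k => (1 + k) ^ ⌈M⌉₊ / q ^ k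
  have hw : ∀ k, 0 ≤ w k := fun k => by positivity
  have hws : Summable w := summable_one_add_pow_div_pow hq _
  refine ⟨C * (∑' k, w k) ^ Fintype.card ι, by positivity, fun p hp t => ?_⟩
  have hp0 : 0 < p := by linarith
  have hterm : ∀ ν : ι → ℕ, g ν / p ^ ∑ i, σ i * ν i ≤
      (if ν = 0 then 1 else 0) + C / p ^ (1 + δ) * ∏ i, w (ν i) := by
    intro ν
    by_cases hν : ν = 0
    · subst hν
      norm_num [hg0]
      positivity
    by_cases hgν : g ν = 0
    · simp only [hgν, Nat.cast_zero, zero_div, hν, if_false, zero_add]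
      exact mul_nonneg (by positivity) (prod_nonneg fun i _ => hw _)
    have hexp : 1 + δ + δ * ((∑ i, ν i : ℕ) : ℝ) ≤ ∑ i, σ i * ν i :=
      calc 1 + δ + δ * ((∑ i, ν i : ℕ) : ℝ)
          ≤ (1 + δ) * ∑ i, c i * ν i + δ * ∑ i, (ν i : ℝ) := by
            push_cast; nlinarith [hc ν hν hgν]
        _ = ∑ i, ((1 + δ) * c i + δ) * ν i := by
            rw [mul_sum, mul_sum, ← sum_add_distrib]; exact sum_congr rfl fun i _ => by ring
        _ ≤ ∑ i, σ i * ν i :=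
            sum_le_sum fun i _ => mul_le_mul_of_nonneg_right (hσ i) (Nat.cast_nonneg _)
    have hpow : p ^ (1 + δ) * ∏ i, q ^ ν i ≤ p ^ ∑ i, σ i * ν i :=
      calc p ^ (1 + δ) * ∏ i, q ^ ν i
          = p ^ (1 + δ) * (2 ^ δ) ^ (∑ i, ν i) := by rw [prod_pow_eq_pow_sum]
        _ ≤ p ^ (1 + δ) * (p ^ δ) ^ (∑ i, ν i) := by
            gcongr
        _ = p ^ (1 + δ + δ * ((∑ i, ν i : ℕ) : ℝ)) := by
            rw [Real.rpow_add hp0 (1 + δ), Real.rpow_mul_natCast hp0.le]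
        _ ≤ p ^ ∑ i, σ i * ν i := Real.rpow_le_rpow_of_exponent_le (by linarith) hexp
    have hgrowth : (g ν : ℝ) ≤ C * ∏ i, (1 + (ν i : ℝ)) ^ ⌈M⌉₊ :=
      (hgC ν).trans (mul_le_mul_of_nonneg_left
        (univ.one_add_sum_rpow_le_prod_pow_ceil (fun i => Nat.cast_nonneg _) M) (by linarith))
    calc g ν / p ^ ∑ i, σ i * ν i
        ≤ C * (∏ i, (1 + (ν i : ℝ)) ^ ⌈M⌉₊) / (p ^ (1 + δ) * ∏ i, q ^ ν i) := by
          gcongr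
        _ = (if ν = 0 then 1 else 0) + C / p ^ (1 + δ) * ∏ i, w (ν i) := by
          simp only [hν, if_false, zero_add, w, prod_div_distrib]
          ring
  calc ∑ ν ∈ t, g ν / p ^ ∑ i, σ i * ν i
      ≤ ∑ ν ∈ t, ((if ν = 0 then 1 else 0) + C / p ^ (1 + δ) * ∏ i, w (ν i)) :=
        sum_le_sum fun ν _ => hterm ν
    _ = (if 0 ∈ t then 1 else 0) + C / p ^ (1 + δ) * ∑ ν ∈ t, ∏ i, w (ν i) := by
        rw [sum_add_distrib, sum_ite_eq', mul_sum]
    _ ≤ 1 + C / p ^ (1 + δ) * (∑' k, w k) ^ Fintype.card ι := by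
        gcongr
        · split_ifs <;> norm_num
        · exact sum_prod_le_tsum_pow hw hws t
    _ = 1 + C * (∑' k, w k) ^ Fintype.card ι / p ^ (1 + δ) := by ring

theorem stmt8_general (n : ℕ) (f g : (Fin n → ℕ) → ℕ) (C M : ℝ)
    (hmult : ∀ m m' : Fin n → ℕ, (∀ i, 0 < m i) → (∀ i, 0 < m' i) →
      Nat.gcd (Finset.univ.lcm m) (Finset.univ.lcm m') = 1 →
      f (fun i => m i * m' i) = f m * f m')
    (huniform : ∀ p : ℕ, p.Prime → ∀ ν : Fin n → ℕ,
      f (fun i => p ^ ν i) = g ν ∧ (g ν : ℝ) ≤ C * (1 + ∑ i, (ν i : ℝ)) ^ M)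
    (hS : {ν : Fin n → ℕ | ν ≠ 0 ∧ g ν ≠ 0}.Nonempty)
    (E : Set (Fin n → ℝ))
    (hE : E = frontier (convexHull ℝ
      (⋃ ν ∈ {ν : Fin n → ℕ | ν ≠ 0 ∧ g ν ≠ 0},
        {x : Fin n → ℝ | ∀ i, (ν i : ℝ) ≤ x i})))
    (c : Fin n → ℝ) (hcpos : ∀ i, 0 < c i)
    (hglb : IsGLB ((fun x => ∑ i, c i * x i) '' E) 1)
    (s : Fin n → ℂ) (hs : ∀ i, c i < (s i).re) :
    Summable (fun m : {m : Fin n → ℕ // ∀ i, 0 < m i} =>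
      ‖(f m.1 : ℂ) / ∏ i, (m.1 i : ℂ) ^ (s i)‖) := by
  obtain ⟨ν₀, hν₀, hgν₀⟩ := hS
  have hf : IsMultiplicativeVec f := hmult
  have hfg (p : ℕ) (hp : p.Prime) (ν : Fin n → ℕ) : f (fun i => p ^ ν i) = g ν :=
    (huniform p hp ν).1
  have hf1 : f 1 = 1 :=
    hf.map_one_eq_one (fun i => pow_pos two_pos (ν₀ i)) (by rwa [hfg 2 Nat.prime_two])
  have hg0 : g 0 = 1 := by
    rw [← hfg 2 Nat.prime_two 0]
    simp only [Pi.zero_apply, pow_zero]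
    exact hf1
  have : Nonempty (Fin n) := not_isEmpty_iff.1 fun h => hν₀ (Subsingleton.elim _ _)
  have hsupp (ν : Fin n → ℕ) (hν : ν ≠ 0) (hgν : g ν ≠ 0) : 1 ≤ ∑ i, c i * ν i := by
    refine le_sum_mul_of_le_on_frontier (convexHull_min ?_ (convex_Ici 0))
      (fun i => (hcpos i).le) (fun x hx => hglb.1 ⟨x, hE ▸ hx, rfl⟩)
      (subset_convexHull ℝ _ (Set.mem_biUnion (x := ν) ⟨hν, hgν⟩ fun i => le_rfl))
    intro x hx i
    obtain ⟨μ, -, hμ⟩ := Set.mem_iUnion₂.1 hx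
    exact (Nat.cast_nonneg _).trans (hμ i)
  obtain ⟨δ, hδ, hσ⟩ := exists_pos_one_add_mul_add_lt hs
  obtain ⟨A, hA, hloc⟩ := exists_sum_div_rpow_le hδ hg0
    (fun ν => (huniform 2 Nat.prime_two ν).2) hsupp fun i => (hσ i).le
  refine (hf.norm_natCast_div_prod_cpow s).summable_of_sum_primePow_le
    (a := fun p => A / (p : ℝ) ^ (1 + δ)) (by simpa using hf1) (fun m => norm_nonneg _)
    (fun p => by positivity) ?_ fun p hp t => ?_
  · simpa only [div_eq_mul_one_div A] using
      (Real.summable_one_div_nat_rpow.2 (by linarith)).mul_left A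
  · simpa only [hfg p hp, norm_natCast_div_prod_cpow_pow hp.pos] using
      hloc p (by exact_mod_cast hp.two_le) t

/-- for a uniform multiplicative `f : ℕⁿ → ℕ₀` with prime-power profile
`g`, nonempty support `S*(g)`, and `c ∈ (0,∞)ⁿ` a normalized polar vector of the
smallest face `F₀` of the Newton polyhedron of `S*(g)` meeting the diagonal, `F₀`
compact, the multiple Dirichlet series `𝓜(f;s)` converges absolutely whenever
`Re(s_i) > c_i` for all `i`. -/
theorem stmt8 (n : ℕ) (f g : (Fin n → ℕ) → ℕ) (C M : ℝ) (hC : 0 < C) (hM : 0 < M)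
    (hmult : ∀ m m' : Fin n → ℕ, (∀ i, 0 < m i) → (∀ i, 0 < m' i) →
      Nat.gcd (Finset.univ.lcm m) (Finset.univ.lcm m') = 1 →
      f (fun i => m i * m' i) = f m * f m')
    (huniform : ∀ p : ℕ, p.Prime → ∀ ν : Fin n → ℕ,
      f (fun i => p ^ ν i) = g ν ∧ (g ν : ℝ) ≤ C * (1 + ∑ i, (ν i : ℝ)) ^ M)
    (hS : {ν : Fin n → ℕ | ν ≠ 0 ∧ g ν ≠ 0}.Nonempty)
    (E F₀ : Set (Fin n → ℝ))
    (hE : E = frontier (convexHull ℝ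
      (⋃ ν ∈ {ν : Fin n → ℕ | ν ≠ 0 ∧ g ν ≠ 0},
        {x : Fin n → ℝ | ∀ i, (ν i : ℝ) ≤ x i})))
    (c : Fin n → ℝ) (hcpos : ∀ i, 0 < c i)
    (hglb : IsGLB ((fun x => ∑ i, c i * x i) '' E) 1)
    (hF₀ : F₀ = {x ∈ E | ∑ i, c i * x i = 1})
    (hcompact : IsCompact F₀)
    (hdiag : ∃ t : ℝ, 0 < t ∧ (fun _ => t) ∈ F₀)
    (hsmall : ∀ F : Set (Fin n → ℝ),
      (∃ a : Fin n → ℝ, (∀ i, 0 ≤ a i) ∧ a ≠ 0 ∧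
        F = {x ∈ E | ∑ i, a i * x i = sInf ((fun x => ∑ i, a i * x i) '' E)}) →
      (∃ t : ℝ, 0 < t ∧ (fun _ => t) ∈ F) → F₀ ⊆ F)
    (s : Fin n → ℂ) (hs : ∀ i, c i < (s i).re) :
    Summable (fun m : {m : Fin n → ℕ // ∀ i, 0 < m i} =>
      ‖(f m.1 : ℂ) / ∏ i, (m.1 i : ℂ) ^ (s i)‖) :=
  stmt8_general n f g C M hmult huniform hS E hE c hcpos hglb s hs
end

section
/- Fix n ≥ 2 and a = (a₁,…,a_n) ∈ ℕⁿ with q = a₁+⋯+a_n, and suppose each a_i divides q. Then the smallest face of the Newton polyhedron 𝓔(a) (generated by L_n(a) = {r ∈ ℕ₀ⁿ\{0} : q | ⟨a,r⟩ and r₁⋯r_n = 0}) meeting the diagonal equals the convex hull of the points (q/a_i)·e_i, i = 1,…,n; in particular it is a compact facet of 𝓔(a). -/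
open Finset

/-- The Newton polyhedron of a set `I ⊆ ℝ₊ⁿ \ {0}`: the boundary of the convex hull
of `⋃_{α ∈ I} (α + ℝ₊ⁿ)`. -/
noncomputable def newtonPolyhedron (n : ℕ) (I : Set (Fin n → ℝ)) : Set (Fin n → ℝ) :=
  frontier (convexHull ℝ (⋃ α ∈ I, {x : Fin n → ℝ | ∀ i, α i ≤ x i}))

/-- `F` is a face of the polyhedron `E`: cut out on `E` by some polar vector
`a ∈ ℝ₊ⁿ \ {0}` along the infimum value `m(a) = inf_{x ∈ E} ⟨a,x⟩`. -/
def IsFace (n : ℕ) (E F : Set (Fin n → ℝ)) : Prop :=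
  ∃ a : Fin n → ℝ, (∀ i, 0 ≤ a i) ∧ a ≠ 0 ∧
    F = {x ∈ E | ∑ i, a i * x i = sInf ((fun x => ∑ i, a i * x i) '' E)}

/-- `F` meets the diagonal `ℝ₊·𝟏`. -/
def MeetsDiagonal (n : ℕ) (F : Set (Fin n → ℝ)) : Prop :=
  ∃ t : ℝ, 0 < t ∧ (fun _ => t) ∈ F

/-!
With `w = (a_i)`, every `r ∈ L_n(a)` satisfies `⟨w, r⟩ ≥ q`, since `⟨w, r⟩` is a positive
multiple of `q`, and the vertices `(q / a_i) e_i` lie in `L_n(a)` because `a_i ∣ q` and `n ≥ 2`.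
As `{x ≥ 0 | ⟨w, x⟩ ≥ q} = conv {(q / a_i) e_i} + ℝ₊ⁿ`, the convex hull of `⋃ (r + ℝ₊ⁿ)` is exactly
this region, so `𝓔(a)` is its frontier, on which `⟨w, ·⟩` attains its minimum `q` precisely on the
simplex `Δ = {x ≥ 0 | ⟨w, x⟩ = q} = conv {(q / a_i) e_i}`.

For minimality: a diagonal point `t𝟏` has positive coordinates, so it lies on the frontier only if
`⟨w, t𝟏⟩ = q`, i.e. `t𝟏 ∈ Δ`. It is a combination of all vertices of `Δ` with positive weights,
so a linear form that is minimal on `Δ` at `t𝟏` is minimal at every vertex, hence constant on `Δ`.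
-/

open scoped Pointwise

variable {ι : Type*} [Fintype ι]

theorem convexHull_range_subset_setOf_eq_of_le {E : Type*} [AddCommGroup E] [Module ℝ E]
    (f : E →ₗ[ℝ] ℝ) {v : ι → E} {μ : ι → ℝ} (hμ : ∀ i, 0 < μ i) (hμ1 : ∑ i, μ i = 1) {m : ℝ}
    (hle : ∀ i, m ≤ f (v i)) (heq : f (∑ i, μ i • v i) = m) :
    convexHull ℝ (Set.range v) ⊆ {x | f x = m} := by
  have hfm : ∑ i, μ i * f (v i) = m := by simpa only [map_sum, map_smul, smul_eq_mul] using heq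
  have hsum : ∑ i, μ i * (f (v i) - m) = 0 := by
    simp only [mul_sub, sum_sub_distrib, hfm, ← sum_mul, hμ1, one_mul, sub_self]
  rw [sum_eq_zero_iff_of_nonneg fun i _ => mul_nonneg (hμ i).le (sub_nonneg.2 (hle i))] at hsum
  refine convexHull_min ?_ (convex_hyperplane f.isLinear m)
  rintro _ ⟨i, rfl⟩
  exact sub_eq_zero.1 ((mul_eq_zero.1 (hsum i (mem_univ i))).resolve_left (hμ i).ne')

section WeightedSimplex

variable [DecidableEq ι] {w : ι → ℝ} {c : ℝ}

theorem sum_smul_single_div (hw : ∀ i, w i ≠ 0) (hc : c ≠ 0) (x : ι → ℝ) :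
    ∑ i, (w i * x i / c) • Pi.single i (c / w i) = x := by
  conv_rhs => rw [← Finset.univ_sum_single x]
  refine sum_congr rfl fun i _ => ?_
  rw [← Pi.single_smul', smul_eq_mul]
  congr 1
  field_simp [hw i, hc]

theorem convexHull_range_single_div (hw : ∀ i, 0 < w i) (hc : 0 < c) :
    convexHull ℝ (Set.range fun i => Pi.single i (c / w i)) = {x | 0 ≤ x ∧ w ⬝ᵥ x = c} := by
  apply subset_antisymm
  · refine convexHull_min ?_
      ((convex_Ici 0).inter (convex_hyperplane (dotProductBilin ℝ ℝ w).isLinear c))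
    rintro _ ⟨i, rfl⟩
    exact ⟨Pi.single_nonneg.2 (div_pos hc (hw i)).le,
      by rw [dotProduct_single, mul_div_cancel₀ _ (hw i).ne']⟩
  · rintro x ⟨hx0, hx⟩
    rw [← sum_smul_single_div (fun i => (hw i).ne') hc.ne' x]
    refine (convex_convexHull ℝ _).sum_mem (fun i _ => ?_) ?_
      fun i _ => subset_convexHull ℝ _ ⟨i, rfl⟩
    · exact div_nonneg (mul_nonneg (hw i).le (hx0 i)) hc.le
    · rw [← sum_div]
      exact (div_eq_one_iff_eq hc.ne').2 hx

theorem dotProduct_eq_of_le_on_simplex (hw : ∀ i, 0 < w i) (hc : 0 < c) {b : ι → ℝ} {m : ℝ}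
    (hle : ∀ x, 0 ≤ x → w ⬝ᵥ x = c → m ≤ b ⬝ᵥ x) {p : ι → ℝ} (hp : ∀ i, 0 < p i)
    (hwp : w ⬝ᵥ p = c) (hbp : b ⬝ᵥ p = m) {x : ι → ℝ} (hx : 0 ≤ x) (hwx : w ⬝ᵥ x = c) :
    b ⬝ᵥ x = m := by
  have hsub := convexHull_range_subset_setOf_eq_of_le (dotProductBilin ℝ ℝ b)
    (v := fun i => Pi.single i (c / w i)) (μ := fun i => w i * p i / c) (m := m)
    (fun i => div_pos (mul_pos (hw i) (hp i)) hc)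
    (by rw [← sum_div]; exact (div_eq_one_iff_eq hc.ne').2 hwp) ?_ ?_
  · rw [convexHull_range_single_div hw hc] at hsub
    exact hsub ⟨hx, hwx⟩
  · intro i
    have hv := (convexHull_range_single_div hw hc).subset (subset_convexHull ℝ _ ⟨i, rfl⟩)
    exact hle _ hv.1 hv.2
  · rw [sum_smul_single_div (fun i => (hw i).ne') hc.ne' p]
    exact hbp

end WeightedSimplex

section UpperRegion

variable {w : ι → ℝ} {c : ℝ}

theorem setOf_nonneg_le_dotProduct_subset_add (hc : 0 < c) :
    {x : ι → ℝ | 0 ≤ x ∧ c ≤ w ⬝ᵥ x} ⊆ {x | 0 ≤ x ∧ w ⬝ᵥ x = c} + Set.Ici (0 : ι → ℝ) := by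
  rintro x ⟨hx0, hx⟩
  have hS : 0 < w ⬝ᵥ x := hc.trans_le hx
  refine ⟨(c / w ⬝ᵥ x) • x, ⟨smul_nonneg (by positivity) hx0, ?_⟩,
    (1 - c / w ⬝ᵥ x) • x, smul_nonneg (sub_nonneg.2 ((div_le_one hS).2 hx)) hx0, ?_⟩
  · rw [dotProduct_smul, smul_eq_mul, div_mul_cancel₀ _ hS.ne']
  · simp only [← add_smul, add_sub_cancel, one_smul]

theorem isClosed_setOf_nonneg_le_dotProduct :
    IsClosed {x : ι → ℝ | 0 ≤ x ∧ c ≤ w ⬝ᵥ x} :=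
  isClosed_Ici.inter (isClosed_le continuous_const (continuous_const.dotProduct continuous_id))

theorem interior_setOf_nonneg_le_dotProduct (hw : w ≠ 0) :
    interior {x : ι → ℝ | 0 ≤ x ∧ c ≤ w ⬝ᵥ x} = {x | (∀ i, 0 < x i) ∧ c < w ⬝ᵥ x} := by
  classical
  obtain ⟨i, hi⟩ := Function.ne_iff.1 hw
  have hsurj : Function.Surjective (dotProductBilin ℝ ℝ w) := fun t =>
    ⟨Pi.single i (t / w i), by simp [dotProduct_single, mul_div_cancel₀ _ hi]⟩
  have hopen := (dotProductBilin ℝ ℝ w).isOpenMap_of_finiteDimensional hsurj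
  change interior (Set.Ici 0 ∩ (dotProductBilin ℝ ℝ w) ⁻¹' Set.Ici c) = _
  rw [interior_inter, ← Set.pi_univ_Ici, interior_pi_set Set.finite_univ,
    ← hopen.preimage_interior_eq_interior_preimage
      (dotProductBilin ℝ ℝ w).continuous_of_finiteDimensional, interior_Ici]
  ext x
  simp

theorem frontier_setOf_nonneg_le_dotProduct (hw : w ≠ 0) :
    frontier {x : ι → ℝ | 0 ≤ x ∧ c ≤ w ⬝ᵥ x} =
      {x | 0 ≤ x ∧ c ≤ w ⬝ᵥ x} \ {x | (∀ i, 0 < x i) ∧ c < w ⬝ᵥ x} := by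
  rw [isClosed_setOf_nonneg_le_dotProduct.frontier_eq, interior_setOf_nonneg_le_dotProduct hw]

theorem setOf_nonneg_dotProduct_eq_subset_frontier (hw : w ≠ 0) :
    {x : ι → ℝ | 0 ≤ x ∧ w ⬝ᵥ x = c} ⊆ frontier {x | 0 ≤ x ∧ c ≤ w ⬝ᵥ x} := by
  rw [frontier_setOf_nonneg_le_dotProduct hw]
  exact fun x ⟨hx0, hx⟩ => ⟨⟨hx0, hx.ge⟩, fun h => h.2.ne' hx⟩

theorem convexHull_biUnion_Ici_eq [DecidableEq ι] (hw : ∀ i, 0 < w i) (hc : 0 < c) {I : Set (ι → ℝ)}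
    (hI : ∀ α ∈ I, 0 ≤ α ∧ c ≤ w ⬝ᵥ α) (hvI : ∀ i, Pi.single i (c / w i) ∈ I) :
    convexHull ℝ (⋃ α ∈ I, {x | ∀ i, α i ≤ x i}) = {x | 0 ≤ x ∧ c ≤ w ⬝ᵥ x} := by
  apply subset_antisymm
  · refine convexHull_min (Set.iUnion₂_subset fun α hα x hx => ?_)
      ((convex_Ici 0).inter (convex_halfSpace_ge (dotProductBilin ℝ ℝ w).isLinear c))
    exact ⟨(hI α hα).1.trans hx,
      (hI α hα).2.trans (dotProduct_le_dotProduct_of_nonneg_left hx fun i => (hw i).le)⟩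
  · refine (setOf_nonneg_le_dotProduct_subset_add hc).trans ?_
    rw [← convexHull_range_single_div hw hc, ← (convex_Ici (𝕜 := ℝ) (0 : ι → ℝ)).convexHull_eq,
      ← convexHull_add]
    refine convexHull_mono ?_
    rintro _ ⟨_, ⟨i, rfl⟩, d, hd, rfl⟩
    exact Set.mem_biUnion (hvI i) fun j => le_add_of_nonneg_right (hd j)

end UpperRegion

theorem finrank_vectorSpan_convexHull_range_single [DecidableEq ι] [Nonempty ι] {x : ι → ℝ}
    (hx : ∀ i, x i ≠ 0) :
    Module.finrank ℝ (vectorSpan ℝ (convexHull ℝ (Set.range fun i => Pi.single i (x i)))) =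
      Fintype.card ι - 1 := by
  rw [← direction_affineSpan, affineSpan_convexHull, direction_affineSpan]
  exact (Pi.linearIndependent_single_of_ne_zero hx).affineIndependent.finrank_vectorSpan
    (Nat.succ_pred_eq_of_pos Fintype.card_pos).symm

section Faces

variable {n : ℕ} [NeZero n] {w : Fin n → ℝ} {c : ℝ}

theorem isFace_frontier_setOf_nonneg_le_dotProduct (hw : ∀ i, 0 < w i) (hc : 0 < c) :
    IsFace n (frontier {x | 0 ≤ x ∧ c ≤ w ⬝ᵥ x}) {x | 0 ≤ x ∧ w ⬝ᵥ x = c} := by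
  have hw0 : w ≠ 0 := fun h => (hw 0).ne' (congrFun h 0)
  have hsub := setOf_nonneg_dotProduct_eq_subset_frontier (c := c) hw0
  have hinf : sInf ((w ⬝ᵥ ·) '' frontier {x | 0 ≤ x ∧ c ≤ w ⬝ᵥ x}) = c := by
    have hv : w ⬝ᵥ Pi.single 0 (c / w 0) = c := by
      rw [dotProduct_single, mul_div_cancel₀ _ (hw 0).ne']
    refine IsLeast.csInf_eq ⟨⟨_, hsub ⟨Pi.single_nonneg.2 (div_pos hc (hw 0)).le, hv⟩, hv⟩, ?_⟩
    rintro _ ⟨x, hx, rfl⟩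
    exact (isClosed_setOf_nonneg_le_dotProduct.frontier_subset hx).2
  refine ⟨w, fun i => (hw i).le, hw0, ?_⟩
  change _ = {x | x ∈ _ ∧ w ⬝ᵥ x = sInf ((w ⬝ᵥ ·) '' _)}
  rw [hinf]
  ext x
  exact ⟨fun hx => ⟨hsub hx, hx.2⟩,
    fun ⟨hx, hxc⟩ => ⟨(isClosed_setOf_nonneg_le_dotProduct.frontier_subset hx).1, hxc⟩⟩

theorem meetsDiagonal_setOf_nonneg_dotProduct_eq (hw : ∀ i, 0 < w i) (hc : 0 < c) :
    MeetsDiagonal n {x | 0 ≤ x ∧ w ⬝ᵥ x = c} := by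
  have hsum : 0 < ∑ i, w i := sum_pos (fun i _ => hw i) univ_nonempty
  refine ⟨c / ∑ i, w i, div_pos hc hsum, fun _ => (div_pos hc hsum).le, ?_⟩
  change ∑ i, w i * (c / ∑ i, w i) = c
  rw [← sum_mul, mul_div_cancel₀ _ hsum.ne']

theorem setOf_nonneg_dotProduct_eq_subset_of_isFace (hw : ∀ i, 0 < w i) (hc : 0 < c)
    {F : Set (Fin n → ℝ)} (hF : IsFace n (frontier {x | 0 ≤ x ∧ c ≤ w ⬝ᵥ x}) F)
    (hdiag : MeetsDiagonal n F) : {x | 0 ≤ x ∧ w ⬝ᵥ x = c} ⊆ F := by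
  obtain ⟨b, hb, -, rfl⟩ := hF
  obtain ⟨t, ht, htE, htm⟩ := hdiag
  have hw0 : w ≠ 0 := fun h => (hw 0).ne' (congrFun h 0)
  have hsub := setOf_nonneg_dotProduct_eq_subset_frontier (c := c) hw0
  have hle : ∀ x ∈ frontier {x | 0 ≤ x ∧ c ≤ w ⬝ᵥ x},
      sInf ((b ⬝ᵥ ·) '' frontier {x | 0 ≤ x ∧ c ≤ w ⬝ᵥ x}) ≤ b ⬝ᵥ x := by
    refine fun x hx => csInf_le ⟨0, ?_⟩ ⟨x, hx, rfl⟩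
    rintro _ ⟨y, hy, rfl⟩
    exact dotProduct_nonneg_of_nonneg hb (isClosed_setOf_nonneg_le_dotProduct.frontier_subset hy).1
  have htc : w ⬝ᵥ (fun _ => t) = c := by
    rw [frontier_setOf_nonneg_le_dotProduct hw0] at htE
    exact le_antisymm (not_lt.1 fun h => htE.2 ⟨fun _ => ht, h⟩) htE.1.2
  exact fun x hx => ⟨hsub hx, dotProduct_eq_of_le_on_simplex hw hc
    (fun y hy0 hy => hle y (hsub ⟨hy0, hy⟩)) (fun _ => ht) htc htm hx.1 hx.2⟩

end Faces

section LatticePoints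

variable {a : ι → ℕ} {q : ℕ}

theorem le_sum_mul_of_dvd (ha : ∀ i, 0 < a i) {r : ι → ℕ} (hr : r ≠ 0)
    (hq : q ∣ ∑ i, a i * r i) : q ≤ ∑ i, a i * r i := by
  obtain ⟨i, hi⟩ := Function.ne_iff.1 hr
  exact Nat.le_of_dvd (sum_pos' (fun _ _ => Nat.zero_le _)
    ⟨i, mem_univ i, Nat.mul_pos (ha i) (Nat.pos_of_ne_zero hi)⟩) hq

theorem single_div_mem_setOf [DecidableEq ι] [Nontrivial ι] (ha : ∀ i, 0 < a i) (hq : 0 < q)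
    (hdvd : ∀ i, a i ∣ q) (i : ι) :
    Pi.single i (q / a i) ∈ {r : ι → ℕ | r ≠ 0 ∧ q ∣ ∑ i, a i * r i ∧ ∃ i, r i = 0} := by
  obtain ⟨j, hj⟩ := exists_ne i
  refine ⟨fun h => ?_, ?_, j, by simp [hj]⟩
  · have := congrFun h i
    simp only [Pi.single_eq_same, Pi.zero_apply] at this
    exact (Nat.div_pos (Nat.le_of_dvd hq (hdvd i)) (ha i)).ne' this
  · change q ∣ a ⬝ᵥ Pi.single i (q / a i)
    rw [dotProduct_single, Nat.mul_div_cancel' (hdvd i)]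

end LatticePoints

theorem newtonPolyhedron_eq_frontier {n : ℕ} [Nontrivial (Fin n)] {a : Fin n → ℕ} {q : ℕ}
    (ha : ∀ i, 0 < a i) (hq : 0 < q) (hdvd : ∀ i, a i ∣ q) :
    newtonPolyhedron n ((fun r : Fin n → ℕ => fun i => (r i : ℝ)) ''
      {r : Fin n → ℕ | r ≠ 0 ∧ q ∣ ∑ i, a i * r i ∧ ∃ i, r i = 0}) =
      frontier {x | 0 ≤ x ∧ (q : ℝ) ≤ (fun i => (a i : ℝ)) ⬝ᵥ x} := by
  rw [newtonPolyhedron, convexHull_biUnion_Ici_eq (fun i => Nat.cast_pos.2 (ha i))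
    (Nat.cast_pos.2 hq)]
  · rintro _ ⟨r, ⟨hr, hrq, -⟩, rfl⟩
    refine ⟨fun i => Nat.cast_nonneg _, ?_⟩
    change (q : ℝ) ≤ ∑ i, (a i : ℝ) * r i
    exact_mod_cast le_sum_mul_of_dvd ha hr hrq
  · intro i
    refine ⟨_, single_div_mem_setOf ha hq hdvd i, funext fun j => ?_⟩
    change (((Pi.single i (q / a i) : Fin n → ℕ) j : ℕ) : ℝ) =
      (Pi.single i ((q : ℝ) / a i) : Fin n → ℝ) j
    rw [Pi.apply_single (fun _ (k : ℕ) => (k : ℝ)) (fun _ => Nat.cast_zero),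
      Nat.cast_div (hdvd i) (Nat.cast_ne_zero.2 (ha i).ne')]

/-- for `n ≥ 2` and `a ∈ ℕⁿ` with `q = Σ a_i` and each `a_i ∣ q`, the
smallest face of the Newton polyhedron `𝓔(a)` of
`L_n(a) = {r ∈ ℕ₀ⁿ \ {0} : q ∣ ⟨a,r⟩, r₁⋯r_n = 0}` which meets the diagonal equals
`conv{(q/a_i)·e_i : i}`; in particular it is a compact facet (a face of dimension
`n-1`). -/
theorem stmt10 (n : ℕ) (hn : 2 ≤ n) (a : Fin n → ℕ) (ha : ∀ i, 0 < a i)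
    (q : ℕ) (hq : q = ∑ i, a i) (hdvd : ∀ i, a i ∣ q)
    (E F : Set (Fin n → ℝ))
    (hE : E = newtonPolyhedron n ((fun r : Fin n → ℕ => fun i => (r i : ℝ)) ''
      {r : Fin n → ℕ | r ≠ 0 ∧ q ∣ ∑ i, a i * r i ∧ ∃ i, r i = 0}))
    (hF : F = convexHull ℝ
      (Set.range fun i : Fin n => Pi.single i ((q : ℝ) / (a i)))) :
    IsFace n E F ∧ MeetsDiagonal n F ∧
      (∀ F' : Set (Fin n → ℝ), IsFace n E F' → MeetsDiagonal n F' → F ⊆ F') ∧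
      IsCompact F ∧ Module.finrank ℝ ↥(vectorSpan ℝ F) = n - 1 := by
  have : NeZero n := ⟨by omega⟩
  have : Nontrivial (Fin n) := Fin.nontrivial_iff_two_le.2 hn
  have hq0 : 0 < q := hq ▸ sum_pos (fun i _ => ha i) univ_nonempty
  have hqR : (0 : ℝ) < q := Nat.cast_pos.2 hq0
  set w : Fin n → ℝ := fun i => a i
  have hw : ∀ i, 0 < w i := fun i => Nat.cast_pos.2 (ha i)
  have hEK : E = frontier {x | 0 ≤ x ∧ (q : ℝ) ≤ w ⬝ᵥ x} :=
    hE.trans (newtonPolyhedron_eq_frontier ha hq0 hdvd)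
  have hFS : F = {x | 0 ≤ x ∧ w ⬝ᵥ x = q} := hF.trans (convexHull_range_single_div hw hqR)
  refine ⟨hEK ▸ hFS ▸ isFace_frontier_setOf_nonneg_le_dotProduct hw hqR,
    hFS ▸ meetsDiagonal_setOf_nonneg_dotProduct_eq hw hqR,
    fun F' hF' hdiag =>
      hFS ▸ setOf_nonneg_dotProduct_eq_subset_of_isFace hw hqR (hEK ▸ hF') hdiag,
    hF ▸ (Set.finite_range _).isCompact_convexHull ℝ, ?_⟩
  rw [hF, finrank_vectorSpan_convexHull_range_single fun i => (div_pos hqR (hw i)).ne',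
    Fintype.card_fin]
end
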